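/- (Commutation of the projection with the covariance tensor.) Let n ≥ 1, M > 0, let ν be a probability measure on ℝⁿ supported in { x : ‖x‖₂ ≤ M }, set A := ∫ xxᵀ dν(x), and for W ∈ ℝ^{n×n} with WᵀW = I and WWᵀ = I define M_{ijkl} := ∫ G(xxᵀ − A, W)_{ij} G(xxᵀ − A, W)_{kl} dν(x) and P_{ijkl} := (1/2)( Σ_s w_{is} w_{ks} δ_{jl} − w_{kj} w_{il} ). Then M = P M P and P M = M P, where products of fourth-order tensors are defined by (S T)_{ijkl} := Σ_{r,s} S_{ijrs} T_{rskl}. -/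

import Mathlib

open Matrix

/-- `Σ(Λ,Q)`: entrywise, `(QᵀΛQ)_{jk}` for `j > k`, `−(QᵀΛQ)_{jk}` for `j < k`, `0` on the
diagonal. -/
noncomputable def sigmaMat {n : ℕ} (Λ Q : Matrix (Fin n) (Fin n) ℝ) :
    Matrix (Fin n) (Fin n) ℝ :=
  Matrix.of fun j k =>
    if (k : ℕ) < (j : ℕ) then (Qᵀ * Λ * Q) j k
    else if (j : ℕ) < (k : ℕ) then -((Qᵀ * Λ * Q) j k)
    else 0

/-- Frobenius norm of a matrix. -/
noncomputable def frobNorm {n : ℕ} (A : Matrix (Fin n) (Fin n) ℝ) : ℝ :=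
  Real.sqrt (∑ i, ∑ j, (A i j) ^ 2)

/-- Euclidean (`ℓ²`) norm on `ℝⁿ`. -/
noncomputable def euclNorm {n : ℕ} (x : Fin n → ℝ) : ℝ :=
  Real.sqrt (∑ i, (x i) ^ 2)

/-- The rank-one matrix `xxᵀ`. -/
def outer {n : ℕ} (x : Fin n → ℝ) : Matrix (Fin n) (Fin n) ℝ :=
  Matrix.of fun i j => x i * x j

/-- `G(Λ,Q) := ΛQ − QQᵀΛQ + QΣ(Λ,Q)`. -/
noncomputable def Gmat {n : ℕ} (Λ Q : Matrix (Fin n) (Fin n) ℝ) :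
    Matrix (Fin n) (Fin n) ℝ :=
  Λ * Q - Q * Qᵀ * Λ * Q + Q * sigmaMat Λ Q

open MeasureTheory

/-!
For orthogonal `W` one has `G(Λ,W) = W Σ(Λ,W)`, and `Σ(Λ,W)` is skew-symmetric when `Λ` is
symmetric, so every sample of the noise lies in the tangent space `W 𝔰𝔬(n)`. Contracting `P`
with a matrix `X` gives `(X − W Xᵀ W) / 2`, which fixes `W S` for skew `S`. Hence `PM = M` by
linearity of the integral, and `MP = M` follows from the symmetries `P_{ijkl} = P_{klij}` and
`M_{ijkl} = M_{klij}`.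
-/
section Algebra

variable {n : ℕ}

lemma sigmaMat_transpose {Λ : Matrix (Fin n) (Fin n) ℝ} (hΛ : Λᵀ = Λ)
    (Q : Matrix (Fin n) (Fin n) ℝ) : (sigmaMat Λ Q)ᵀ = -sigmaMat Λ Q := by
  have hsym : (Qᵀ * Λ * Q)ᵀ = Qᵀ * Λ * Q := by
    simp [Matrix.transpose_mul, hΛ, Matrix.mul_assoc]
  ext j k
  have hjk : (Qᵀ * Λ * Q) k j = (Qᵀ * Λ * Q) j k := by
    rw [← Matrix.transpose_apply (Qᵀ * Λ * Q) j k, hsym]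
  simp only [sigmaMat, Matrix.transpose_apply, Matrix.of_apply, Matrix.neg_apply, hjk]
  rcases lt_trichotomy (j : ℕ) k with h | h | h
  · simp [h, h.not_gt]
  · simp [h]
  · simp [h, h.not_gt]

lemma Gmat_eq_mul_sigmaMat (Λ : Matrix (Fin n) (Fin n) ℝ) {Q : Matrix (Fin n) (Fin n) ℝ}
    (hQ : Q * Qᵀ = 1) : Gmat Λ Q = Q * sigmaMat Λ Q := by
  simp [Gmat, hQ]

lemma outer_transpose (x : Fin n → ℝ) : (outer x)ᵀ = outer x := by
  ext i j
  exact mul_comm _ _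

end Algebra

section Projection

variable {m : Type*} [Fintype m] [DecidableEq m]

noncomputable def tangentProjTensor (W : Matrix m m ℝ) : m → m → m → m → ℝ :=
  fun i j k l => (1 / 2) * ((∑ s, W i s * W k s) * (if j = l then 1 else 0) - W k j * W i l)

lemma tangentProjTensor_comm (W : Matrix m m ℝ) (i j k l : m) :
    tangentProjTensor W i j k l = tangentProjTensor W k l i j := by
  simp only [tangentProjTensor, mul_comm (W i _), eq_comm (a := j)]

lemma sum_tangentProjTensor_mul (W X : Matrix m m ℝ) (i j : m) :
    ∑ r, ∑ s, tangentProjTensor W i j r s * X r s =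
      ((1 / 2 : ℝ) • (W * Wᵀ * X - W * Xᵀ * W)) i j := by
  simp only [tangentProjTensor, Matrix.smul_apply, Matrix.sub_apply, Matrix.mul_apply,
    Matrix.transpose_apply, smul_eq_mul, Finset.sum_mul, mul_sub, sub_mul, Finset.mul_sum,
    Finset.sum_sub_distrib, mul_ite, ite_mul, mul_one, mul_zero, zero_mul, Finset.sum_ite_eq,
    Finset.mem_univ, if_true]
  congr 1 <;> exact Finset.sum_congr rfl fun _ _ => Finset.sum_congr rfl fun _ _ => by ring

lemma sum_tangentProjTensor_mul_skew {W S : Matrix m m ℝ} (hW : W * Wᵀ = 1) (hS : Sᵀ = -S)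
    (i j : m) : ∑ r, ∑ s, tangentProjTensor W i j r s * (W * S) r s = (W * S) i j := by
  have hreflect : W * (W * S)ᵀ * W = -(W * S) := by
    rw [Matrix.transpose_mul, hS, Matrix.mul_assoc, Matrix.mul_assoc, mul_eq_one_comm.mp hW,
      Matrix.mul_one, Matrix.mul_neg]
  rw [sum_tangentProjTensor_mul, hreflect, ← Matrix.mul_assoc, hW, Matrix.one_mul,
    sub_neg_eq_add, ← two_smul ℝ, smul_smul]
  norm_num

lemma sum_tangentProjTensor_mul_Gmat {n : ℕ} {Λ W : Matrix (Fin n) (Fin n) ℝ} (hΛ : Λᵀ = Λ)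
    (hW : W * Wᵀ = 1) (i j : Fin n) :
    ∑ r, ∑ s, tangentProjTensor W i j r s * Gmat Λ W r s = Gmat Λ W i j := by
  simpa only [Gmat_eq_mul_sigmaMat _ hW] using
    sum_tangentProjTensor_mul_skew hW (sigmaMat_transpose hΛ W) i j

lemma sum_mul_tangentProjTensor_of_comm {T : m → m → m → m → ℝ}
    (hT : ∀ i j k l, T i j k l = T k l i j) (W : Matrix m m ℝ) (i j k l : m) :
    ∑ r, ∑ s, T i j r s * tangentProjTensor W r s k l =
      ∑ r, ∑ s, tangentProjTensor W k l r s * T r s i j :=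
  Finset.sum_congr rfl fun r _ => Finset.sum_congr rfl fun s _ => by
    rw [hT, tangentProjTensor_comm, mul_comm]

end Projection

lemma sum_sum_mul_integral_mul_of_fixed {Ω m m' : Type*} [MeasurableSpace Ω] {μ : Measure Ω}
    [Fintype m] [Fintype m'] (T : m → m' → m → m' → ℝ) (G : Ω → Matrix m m' ℝ) {i k : m}
    {j l : m'} (hT : ∀ x, ∑ r, ∑ s, T i j r s * G x r s = G x i j)
    (hG : ∀ r s, Integrable (fun x => G x r s * G x k l) μ) :
    ∑ r, ∑ s, T i j r s * ∫ x, G x r s * G x k l ∂μ = ∫ x, G x i j * G x k l ∂μ := by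
  calc ∑ r, ∑ s, T i j r s * ∫ x, G x r s * G x k l ∂μ
      = ∫ x, ∑ r, ∑ s, T i j r s * (G x r s * G x k l) ∂μ := by
        rw [integral_finsetSum _ fun r _ =>
          integrable_finsetSum _ fun s _ => (hG r s).const_mul _]
        refine Finset.sum_congr rfl fun r _ => ?_
        rw [integral_finsetSum _ fun s _ => (hG r s).const_mul _]
        simp only [integral_const_mul]
    _ = ∫ x, G x i j * G x k l ∂μ := by
        simp only [← mul_assoc, ← Finset.sum_mul, hT]

lemma Continuous.integrable_of_ae_mem_compact {X E : Type*} [TopologicalSpace X]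
    [MeasurableSpace X] [OpensMeasurableSpace X] [T2Space X] [NormedAddCommGroup E]
    {μ : Measure X} [IsFiniteMeasureOnCompacts μ] {f : X → E} {K : Set X} (hf : Continuous f)
    (hK : IsCompact K) (hμK : ∀ᵐ x ∂μ, x ∈ K) : Integrable f μ := by
  rw [← Measure.restrict_eq_self_of_ae_mem hμK]
  exact hf.continuousOn.integrableOn_compact hK

section Continuity

variable {n : ℕ}

lemma continuous_sigmaMat_left (Q : Matrix (Fin n) (Fin n) ℝ) :
    Continuous fun Λ : Matrix (Fin n) (Fin n) ℝ => sigmaMat Λ Q := by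
  have hQΛQ : Continuous fun Λ : Matrix (Fin n) (Fin n) ℝ => Qᵀ * Λ * Q :=
    (continuous_const.matrix_mul continuous_id).matrix_mul continuous_const
  refine continuous_pi fun j => continuous_pi fun k => ?_
  simp only [sigmaMat, Matrix.of_apply]
  split_ifs
  · exact hQΛQ.matrix_elem j k
  · exact (hQΛQ.matrix_elem j k).neg
  · exact continuous_const

lemma continuous_Gmat_left (Q : Matrix (Fin n) (Fin n) ℝ) :
    Continuous fun Λ : Matrix (Fin n) (Fin n) ℝ => Gmat Λ Q := by
  have := continuous_sigmaMat_left Q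
  unfold Gmat
  fun_prop

lemma continuous_outer : Continuous (outer (n := n)) := by
  unfold outer
  fun_prop

lemma continuous_euclNorm : Continuous (euclNorm (n := n)) := by
  unfold euclNorm
  fun_prop

lemma norm_le_euclNorm (x : Fin n → ℝ) : ‖x‖ ≤ euclNorm x := by
  refine (pi_norm_le_iff_of_nonneg (Real.sqrt_nonneg _)).2 fun i => ?_
  rw [Real.norm_eq_abs, ← Real.sqrt_sq_eq_abs]
  exact Real.sqrt_le_sqrt (Finset.single_le_sum (fun j _ => sq_nonneg (x j)) (Finset.mem_univ i))

lemma isCompact_euclNorm_le (M : ℝ) : IsCompact {x : Fin n → ℝ | euclNorm x ≤ M} :=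
  Metric.isCompact_of_isClosed_isBounded (isClosed_le continuous_euclNorm continuous_const)
    ((Metric.isBounded_closedBall (x := 0) (r := M)).subset fun x hx =>
      mem_closedBall_zero_iff.2 ((norm_le_euclNorm x).trans hx))

lemma integrable_Gmat_outer_sub_mul {M : ℝ} {ν : Measure (Fin n → ℝ)} [IsProbabilityMeasure ν]
    (hsupp : ν {x | euclNorm x ≤ M} = 1) (A W : Matrix (Fin n) (Fin n) ℝ) (a b c d : Fin n) :
    Integrable (fun x => Gmat (outer x - A) W a b * Gmat (outer x - A) W c d) ν := by
  have hG : Continuous fun x : Fin n → ℝ => Gmat (outer x - A) W :=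
    (continuous_Gmat_left W).comp (continuous_outer.sub continuous_const)
  exact ((hG.matrix_elem a b).mul (hG.matrix_elem c d)).integrable_of_ae_mem_compact
    (isCompact_euclNorm_le M)
    ((mem_ae_iff_prob_eq_one (isCompact_euclNorm_le M).isClosed.measurableSet).2 hsupp)

end Continuity

theorem projection_commutes_with_covariance_general {n : ℕ} (M : ℝ)
    (ν : Measure (Fin n → ℝ)) [IsProbabilityMeasure ν]
    (hsupp : ν {x | euclNorm x ≤ M} = 1)
    (A : Matrix (Fin n) (Fin n) ℝ) (hA : ∀ i j, A i j = ∫ x, x i * x j ∂ν)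
    (W : Matrix (Fin n) (Fin n) ℝ) (h2 : W * Wᵀ = 1)
    (Mten : Fin n → Fin n → Fin n → Fin n → ℝ)
    (hMten : ∀ i j k l, Mten i j k l =
      ∫ x, Gmat (outer x - A) W i j * Gmat (outer x - A) W k l ∂ν)
    (P : Fin n → Fin n → Fin n → Fin n → ℝ)
    (hP : ∀ i j k l, P i j k l =
      (1 / 2) * ((∑ s, W i s * W k s) * (if j = l then (1 : ℝ) else 0) - W k j * W i l)) :
    (∀ i j k l,
      (∑ r, ∑ s, ∑ u, ∑ v, P i j r s * Mten r s u v * P u v k l) = Mten i j k l) ∧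
    (∀ i j k l,
      (∑ r, ∑ s, P i j r s * Mten r s k l) = ∑ r, ∑ s, Mten i j r s * P r s k l) := by
  obtain rfl : P = tangentProjTensor W := by ext i j k l; exact hP i j k l
  have hAsymm : Aᵀ = A := by ext i j; simp only [Matrix.transpose_apply, hA, mul_comm]
  have hΛ : ∀ x, (outer x - A)ᵀ = outer x - A := fun x => by
    rw [Matrix.transpose_sub, outer_transpose, hAsymm]
  have hPM : ∀ i j k l, ∑ r, ∑ s, tangentProjTensor W i j r s * Mten r s k l = Mten i j k l :=
    fun i j k l => by
      simpa only [hMten] using sum_sum_mul_integral_mul_of_fixed _ (fun x => Gmat (outer x - A) W)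
        (fun x => sum_tangentProjTensor_mul_Gmat (hΛ x) h2 i j)
        (fun r s => integrable_Gmat_outer_sub_mul hsupp A W r s k l)
  have hMsymm : ∀ i j k l, Mten i j k l = Mten k l i j := fun i j k l => by
    simp only [hMten, mul_comm]
  have hMP : ∀ i j k l, ∑ r, ∑ s, Mten i j r s * tangentProjTensor W r s k l = Mten i j k l :=
    fun i j k l => by rw [sum_mul_tangentProjTensor_of_comm hMsymm, hPM, hMsymm]
  refine ⟨fun i j k l => ?_, fun i j k l => by rw [hPM, hMP]⟩
  simp only [mul_assoc, ← Finset.mul_sum, hMP, hPM]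

/-- Commutation of the tangent-space projection tensor `P` with the covariance tensor `M` of
the noise `G(xxᵀ − A, W)`, for orthogonal `W`: `M = PMP` and `PM = MP`. -/
theorem projection_commutes_with_covariance {n : ℕ} (hn : 1 ≤ n) (M : ℝ) (hM : 0 < M)
    (ν : Measure (Fin n → ℝ)) [IsProbabilityMeasure ν]
    (hsupp : ν {x | euclNorm x ≤ M} = 1)
    (A : Matrix (Fin n) (Fin n) ℝ) (hA : ∀ i j, A i j = ∫ x, x i * x j ∂ν)
    (W : Matrix (Fin n) (Fin n) ℝ) (h1 : Wᵀ * W = 1) (h2 : W * Wᵀ = 1)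
    (Mten : Fin n → Fin n → Fin n → Fin n → ℝ)
    (hMten : ∀ i j k l, Mten i j k l =
      ∫ x, Gmat (outer x - A) W i j * Gmat (outer x - A) W k l ∂ν)
    (P : Fin n → Fin n → Fin n → Fin n → ℝ)
    (hP : ∀ i j k l, P i j k l =
      (1 / 2) * ((∑ s, W i s * W k s) * (if j = l then (1 : ℝ) else 0) - W k j * W i l)) :
    (∀ i j k l,
      (∑ r, ∑ s, ∑ u, ∑ v, P i j r s * Mten r s u v * P u v k l) = Mten i j k l) ∧
    (∀ i j k l,
      (∑ r, ∑ s, P i j r s * Mten r s k l) = ∑ r, ∑ s, Mten i j r s * P r s k l) :=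
  projection_commutes_with_covariance_general M ν hsupp A hA W h2 Mten hMten P hP
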